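/- arXiv:2004.14359 — 2 statements merged into one kernel-verified Lean document; each statement's English description precedes it below -/
import Mathlib

section
/- Let u be a tangent field on S³ with components f=⟨u,ξ⟩, f₁=⟨u,X₁⟩, f₂=⟨u,X₂⟩, and for a function h write ξ(h)(p)=Dh(p)[Jp]. (i) The Lie bracket [ξ,u](p) := Du(p)[Jp] − J(u(p)) vanishes for all p∈S³ if and only if on S³: ξ(f)=0, ξ(f₁)=−2f₂ and ξ(f₂)=2f₁. (ii) The 1-form on S³ dual to the tangent field φu : p ↦ φ_p(u(p)) is closed — that is, ⟨(∇_v φu)(p), w⟩ = ⟨(∇_w φu)(p), v⟩ for all p∈S³ and all v,w ∈ T_pS³ — if and only if on S³: (div u) − ξ(f) = 0, ξ(f₁)=−2f₂ and ξ(f₂)=2f₁. (These are the S³-instances, with structure constant C₀=1, of the corresponding statements on a Sasakian 3-manifold.) -/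
open RealInnerProductSpace

noncomputable section

/-- ℝ⁴ with coordinates (x₁,y₁,x₂,y₂) and the Euclidean inner product; S³ is the set
of `p` with `‖p‖ = 1`. -/
abbrev E4 := EuclideanSpace ℝ (Fin 4)

/-- The linear map `J(x₁,y₁,x₂,y₂) = (−y₁,x₁,−y₂,x₂)`; its restriction to S³ is the
Hopf field ξ. -/
def Jm (p : E4) : E4 := WithLp.toLp 2 ![-p 1, p 0, -p 3, p 2]

/-- The linear map `J'(x₁,y₁,x₂,y₂) = (−y₁,x₁,y₂,−x₂)`; its restriction to S³ is the
anti-Hopf field ξ'. -/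
def Jm' (p : E4) : E4 := WithLp.toLp 2 ![-p 1, p 0, p 3, -p 2]

/-- The frame field `X₁(p) = (−x₂,y₂,x₁,−y₁)`. -/
def X1 (p : E4) : E4 := WithLp.toLp 2 ![-p 2, p 3, p 0, -p 1]

/-- The frame field `X₂(p) = (−y₂,−x₂,y₁,x₁)`. -/
def X2 (p : E4) : E4 := WithLp.toLp 2 ![-p 3, -p 2, p 1, p 0]

/-- Orthogonal projection onto the tangent space of S³ at `p`: `P_p(v) = v − ⟨p,v⟩p`. -/
def Pt (p v : E4) : E4 := v - ⟪p, v⟫ • p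

/-- A (smooth) tangent field on S³: a smooth map `u : ℝ⁴ → ℝ⁴` with `⟨p, u p⟩ = 0`
for every `p ∈ S³`. -/
def IsTangentField (u : E4 → E4) : Prop :=
  ContDiff ℝ (⊤ : ℕ∞) u ∧ ∀ p : E4, ‖p‖ = 1 → ⟪p, u p⟫ = 0

/-- Levi-Civita covariant derivative of the round metric: `(∇_u v)(p) = P_p(Dv(p)[u(p)])`. -/
def scov (u v : E4 → E4) (p : E4) : E4 := Pt p (fderiv ℝ v p (u p))

/-- Spherical gradient: `(grad f)(p) = P_p(∇f(p))`. -/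
def sgrad (f : E4 → ℝ) (p : E4) : E4 := Pt p (gradient f p)

/-- Spherical divergence: `(div u)(p) = tr(Du(p)) − ⟨Du(p)[p], p⟩`. -/
def sdiv (u : E4 → E4) (p : E4) : ℝ :=
  LinearMap.trace ℝ E4 (fderiv ℝ u p).toLinearMap - ⟪fderiv ℝ u p p, p⟫

/-- Spherical Laplacian with geometers' sign: `Δf = −div (grad f)`. -/
def slap (f : E4 → ℝ) (p : E4) : ℝ := - sdiv (sgrad f) p

/-- The transverse complex structure of the standard Sasakian structure on S³:
`φ_p(v) = Jv + ⟨v, Jp⟩p`. -/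
def phiT (p v : E4) : E4 := Jm v + ⟪v, Jm p⟫ • p

/-- `u` is a steady Euler field on S³ with pressure `pr`: `div u = 0` on S³ and
`(∇_u u)(p) = −(grad pr)(p)` for all `p ∈ S³`. -/
def IsSteadyEulerWithPressure (u : E4 → E4) (pr : E4 → ℝ) : Prop :=
  ∀ p : E4, ‖p‖ = 1 → sdiv u p = 0 ∧ scov u u p = - sgrad pr p

/-- `u` is a steady Euler field on S³, for some smooth pressure. -/
def IsSteadyEuler (u : E4 → E4) : Prop :=
  ∃ pr : E4 → ℝ, ContDiff ℝ (⊤ : ℕ∞) pr ∧ IsSteadyEulerWithPressure u pr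

/-- A tangent field `u` is localizable if `D(|u|²)(p)[u(p)] = 0` for all `p ∈ S³`. -/
def IsLocalizable (u : E4 → E4) : Prop :=
  ∀ p : E4, ‖p‖ = 1 → fderiv ℝ (fun q => ⟪u q, u q⟫) p (u p) = 0

/-- The function `q(p) = x₁² + y₁²`. -/
def qf (p : E4) : ℝ := p 0 ^ 2 + p 1 ^ 2

/-- The KKPS family: `u(p) = A(q(p))·Jp + B(q(p))·J'p`. -/
def kkps (A B : ℝ → ℝ) (p : E4) : E4 := A (qf p) • Jm p + B (qf p) • Jm' p

/-- Determinant of four vectors in ℝ⁴ (given as rows). -/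
def det4 (a b c d : E4) : ℝ :=
  Matrix.det (Matrix.of ![(fun i => a i), (fun i => b i), (fun i => c i), (fun i => d i)])

/-- Cross product of tangent vectors at `p ∈ S³`: `⟨v ×_p w, z⟩ = det(p,v,w,z)`. -/
def crossS (p v w : E4) : E4 := WithLp.toLp 2 (fun i => det4 p v w (WithLp.toLp 2 (Pi.single i 1 : Fin 4 → ℝ)))

/-- `c` is the curl of the tangent field `u` on S³: `c` is a tangent field such that
`⟨(∇_v u)(p), w⟩ − ⟨(∇_w u)(p), v⟩ = ⟨c(p), v ×_p w⟩` for all tangent `v, w` at `p ∈ S³`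
(with the orientation convention given by `det4`, for which `curl ξ = 2ξ`). -/
def IsCurlOf (u c : E4 → E4) : Prop :=
  IsTangentField c ∧
  ∀ p : E4, ‖p‖ = 1 → ∀ v w : E4, ⟪p, v⟫ = 0 → ⟪p, w⟫ = 0 →
    ⟪Pt p (fderiv ℝ u p v), w⟫ - ⟪Pt p (fderiv ℝ u p w), v⟫ = ⟪c p, crossS p v w⟫

/-- The Sasakian KKPS ansatz on S³: `u(p) = F(ψ(p))·Jp + φ_p((grad (G∘ψ))(p))`. -/
def ansatz (ψ : E4 → ℝ) (F G : ℝ → ℝ) (p : E4) : E4 :=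
  F (ψ p) • Jm p + phiT p (sgrad (fun q => G (ψ q)) p)

/-- The quartic polynomial `ψ_a`, a deformation of Nomizu's isoparametric polynomial. -/
def ψa (a : ℝ) (p : E4) : ℝ :=
  (1/2) * ((p 0 ^ 2 + p 1 ^ 2 + p 2 ^ 2 + p 3 ^ 2) ^ 2
      + (p 0 ^ 2 + p 1 ^ 2 - p 2 ^ 2 - p 3 ^ 2) ^ 2)
    + 2 * a * ((p 0 ^ 2 - p 1 ^ 2) * (p 2 ^ 2 - p 3 ^ 2) + 4 * p 0 * p 1 * p 2 * p 3)

/-- The field `u_a(p) = F(ψ_a(p))·Jp + φ_p((grad ψ_a)(p))`. -/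
def nomizuField (a : ℝ) (F : ℝ → ℝ) (p : E4) : E4 :=
  F (ψa a p) • Jm p + phiT p (sgrad (ψa a) p)

/-- The field `u(p) = 2a₁(x₁y₂+y₁x₂)·X₁(p) + 2a₂(x₁x₂−y₁y₂)·X₂(p)`. -/
def abField (a₁ a₂ : ℝ) (p : E4) : E4 :=
  (2 * a₁ * (p 0 * p 3 + p 1 * p 2)) • X1 p + (2 * a₂ * (p 0 * p 2 - p 1 * p 3)) • X2 p

/-! ### Auxiliary lemmas for `statement2` -/

section Statement2Aux

lemma inner4 (x y : E4) : ⟪x, y⟫ = x 0 * y 0 + x 1 * y 1 + x 2 * y 2 + x 3 * y 3 := by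
  simp [PiLp.inner_apply, Fin.sum_univ_four]; ring

lemma norm_one_q {p : E4} (hp : ‖p‖ = 1) : p 0 ^ 2 + p 1 ^ 2 + p 2 ^ 2 + p 3 ^ 2 = 1 := by
  have h := real_inner_self_eq_norm_sq p
  rw [hp, inner4] at h
  nlinarith [h]

lemma frame_expand (p v : E4) (hq : p 0 ^ 2 + p 1 ^ 2 + p 2 ^ 2 + p 3 ^ 2 = 1) :
    v = ⟪v, p⟫ • p + ⟪v, Jm p⟫ • Jm p + ⟪v, X1 p⟫ • X1 p + ⟪v, X2 p⟫ • X2 p := by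
  ext i
  fin_cases i
  · simp [inner4, Jm, X1, X2, PiLp.add_apply, PiLp.smul_apply, smul_eq_mul, Fin.sum_univ_four]
    linear_combination (-1 : ℝ) * v 0 * hq
  · simp [inner4, Jm, X1, X2, PiLp.add_apply, PiLp.smul_apply, smul_eq_mul, Fin.sum_univ_four]
    linear_combination (-1 : ℝ) * v 1 * hq
  · simp [inner4, Jm, X1, X2, PiLp.add_apply, PiLp.smul_apply, smul_eq_mul, Fin.sum_univ_four]
    linear_combination (-1 : ℝ) * v 2 * hq
  · simp [inner4, Jm, X1, X2, PiLp.add_apply, PiLp.smul_apply, smul_eq_mul, Fin.sum_univ_four]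
    linear_combination (-1 : ℝ) * v 3 * hq

def JmL : E4 →L[ℝ] E4 := LinearMap.toContinuousLinearMap
  { toFun := Jm
    map_add' := by intro a b; ext i; fin_cases i <;> simp [Jm, PiLp.add_apply] <;> ring
    map_smul' := by intro c a; ext i; fin_cases i <;> simp [Jm, PiLp.smul_apply, smul_eq_mul] <;> ring }

def X1L : E4 →L[ℝ] E4 := LinearMap.toContinuousLinearMap
  { toFun := X1
    map_add' := by intro a b; ext i; fin_cases i <;> simp [X1, PiLp.add_apply] <;> ring
    map_smul' := by intro c a; ext i; fin_cases i <;> simp [X1, PiLp.smul_apply, smul_eq_mul] <;> ring }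

def X2L : E4 →L[ℝ] E4 := LinearMap.toContinuousLinearMap
  { toFun := X2
    map_add' := by intro a b; ext i; fin_cases i <;> simp [X2, PiLp.add_apply] <;> ring
    map_smul' := by intro c a; ext i; fin_cases i <;> simp [X2, PiLp.smul_apply, smul_eq_mul] <;> ring }

lemma JmL_apply (v : E4) : JmL v = Jm v := rfl
lemma X1L_apply (v : E4) : X1L v = X1 v := rfl
lemma X2L_apply (v : E4) : X2L v = X2 v := rfl

lemma Jm_add (x y : E4) : Jm (x + y) = Jm x + Jm y := map_add JmL x y
lemma Jm_smul (c : ℝ) (x : E4) : Jm (c • x) = c • Jm x := map_smul JmL c x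

-- inner product identities
lemma RJ (x p : E4) : ⟪Jm x, Jm p⟫ = ⟪x, p⟫ := by
  simp [inner4, Jm, Fin.sum_univ_four]; ring
lemma RX1 (x p : E4) : ⟪Jm x, X1 p⟫ = -⟪x, X2 p⟫ := by
  simp [inner4, Jm, X1, X2, Fin.sum_univ_four]; ring
lemma RX2 (x p : E4) : ⟪Jm x, X2 p⟫ = ⟪x, X1 p⟫ := by
  simp [inner4, Jm, X1, X2, Fin.sum_univ_four]; ring
lemma Rp (x p : E4) : ⟪Jm x, p⟫ = -⟪x, Jm p⟫ := by
  simp [inner4, Jm, Fin.sum_univ_four]; ring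

lemma oJ (p : E4) : ⟪p, Jm p⟫ = 0 := by simp [inner4, Jm, Fin.sum_univ_four]; ring
lemma oX1 (p : E4) : ⟪p, X1 p⟫ = 0 := by simp [inner4, X1, Fin.sum_univ_four]; ring
lemma oX2 (p : E4) : ⟪p, X2 p⟫ = 0 := by simp [inner4, X2, Fin.sum_univ_four]; ring

lemma JJ (p : E4) : Jm (Jm p) = -p := by
  ext i; fin_cases i <;> simp [Jm, PiLp.neg_apply]
lemma X1J (p : E4) : X1 (Jm p) = -(X2 p) := by
  ext i; fin_cases i <;> simp [Jm, X1, X2, PiLp.neg_apply]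
lemma X2J (p : E4) : X2 (Jm p) = X1 p := by
  ext i; fin_cases i <;> simp [Jm, X1, X2]

-- derivative of the inner product against a linear frame field
lemma fderiv_fJ (u : E4 → E4) (hud : Differentiable ℝ u) (p v : E4) :
    fderiv ℝ (fun q => ⟪u q, Jm q⟫) p v
      = ⟪fderiv ℝ u p v, Jm p⟫ + ⟪u p, Jm v⟫ := by
  have h := fderiv_inner_apply ℝ (hud p) (JmL.differentiableAt) v
  rw [ContinuousLinearMap.fderiv] at h
  rw [show (fun q => ⟪u q, Jm q⟫) = (fun q => ⟪u q, JmL q⟫) from rfl]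
  rw [h, JmL_apply, JmL_apply]
  ring

lemma fderiv_fX1 (u : E4 → E4) (hud : Differentiable ℝ u) (p v : E4) :
    fderiv ℝ (fun q => ⟪u q, X1 q⟫) p v
      = ⟪fderiv ℝ u p v, X1 p⟫ + ⟪u p, X1 v⟫ := by
  have h := fderiv_inner_apply ℝ (hud p) (X1L.differentiableAt) v
  rw [ContinuousLinearMap.fderiv] at h
  rw [show (fun q => ⟪u q, X1 q⟫) = (fun q => ⟪u q, X1L q⟫) from rfl]
  rw [h, X1L_apply, X1L_apply]
  ring

lemma fderiv_fX2 (u : E4 → E4) (hud : Differentiable ℝ u) (p v : E4) :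
    fderiv ℝ (fun q => ⟪u q, X2 q⟫) p v
      = ⟪fderiv ℝ u p v, X2 p⟫ + ⟪u p, X2 v⟫ := by
  have h := fderiv_inner_apply ℝ (hud p) (X2L.differentiableAt) v
  rw [ContinuousLinearMap.fderiv] at h
  rw [show (fun q => ⟪u q, X2 q⟫) = (fun q => ⟪u q, X2L q⟫) from rfl]
  rw [h, X2L_apply, X2L_apply]
  ring

lemma fderiv_phiTu (u : E4 → E4) (hud : Differentiable ℝ u) (p v : E4) :
    fderiv ℝ (fun q => phiT q (u q)) p v
      = Jm (fderiv ℝ u p v) + (⟪u p, Jm v⟫ + ⟪fderiv ℝ u p v, Jm p⟫) • p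
        + ⟪u p, Jm p⟫ • v := by
  have hu' : HasFDerivAt u (fderiv ℝ u p) p := (hud p).hasFDerivAt
  have h1 : HasFDerivAt (fun q => Jm (u q)) (JmL.comp (fderiv ℝ u p)) p :=
    JmL.hasFDerivAt.comp p hu'
  have h2 := (hu'.inner ℝ JmL.hasFDerivAt)
  have h3 := h2.smul (hasFDerivAt_id p)
  have h4 := h1.add h3
  have h5 : HasFDerivAt (fun q => phiT q (u q)) _ p := h4
  rw [h5.fderiv]
  simp [fderivInnerCLM_apply, ContinuousLinearMap.smulRight_apply, JmL_apply]
  module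

lemma trace_eq_sum (B : E4 →L[ℝ] E4) :
    LinearMap.trace ℝ E4 B.toLinearMap =
      B (EuclideanSpace.single 0 1) 0 + B (EuclideanSpace.single 1 1) 1
      + B (EuclideanSpace.single 2 1) 2 + B (EuclideanSpace.single 3 1) 3 := by
  rw [LinearMap.trace_eq_matrix_trace ℝ (PiLp.basisFun 2 ℝ (Fin 4))]
  simp [Matrix.trace, LinearMap.toMatrix_apply, Fin.sum_univ_four, PiLp.basisFun_apply,
    PiLp.basisFun_repr]

lemma decomp4 (v : E4) :
    v = v 0 • EuclideanSpace.single 0 (1:ℝ) + v 1 • EuclideanSpace.single 1 (1:ℝ)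
      + v 2 • EuclideanSpace.single 2 (1:ℝ) + v 3 • EuclideanSpace.single 3 (1:ℝ) := by
  ext i
  fin_cases i <;>
    simp [EuclideanSpace.single_apply, PiLp.add_apply, PiLp.smul_apply, smul_eq_mul]

lemma apply_decomp (B : E4 →L[ℝ] E4) (v : E4) :
    B v = v 0 • B (EuclideanSpace.single 0 1) + v 1 • B (EuclideanSpace.single 1 1)
      + v 2 • B (EuclideanSpace.single 2 1) + v 3 • B (EuclideanSpace.single 3 1) := by
  conv_lhs => rw [decomp4 v]
  simp only [map_add, map_smul]

lemma trace_frame (B : E4 →L[ℝ] E4) {p : E4}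
    (hq : p 0 ^ 2 + p 1 ^ 2 + p 2 ^ 2 + p 3 ^ 2 = 1) :
    LinearMap.trace ℝ E4 B.toLinearMap
      = ⟪B p, p⟫ + ⟪B (Jm p), Jm p⟫ + ⟪B (X1 p), X1 p⟫ + ⟪B (X2 p), X2 p⟫ := by
  rw [trace_eq_sum, inner4, inner4, inner4, inner4, apply_decomp B p, apply_decomp B (Jm p),
    apply_decomp B (X1 p), apply_decomp B (X2 p)]
  simp only [Jm, X1, X2, PiLp.toLp_apply, PiLp.add_apply, PiLp.smul_apply, smul_eq_mul,
    Matrix.cons_val_zero, Matrix.cons_val_one, Matrix.head_cons, Matrix.cons_val_two,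
    Matrix.tail_cons, Matrix.cons_val_three, Matrix.head_fin_const]
  linear_combination (-(1:ℝ) * (B (EuclideanSpace.single 0 1) 0 + B (EuclideanSpace.single 1 1) 1
    + B (EuclideanSpace.single 2 1) 2 + B (EuclideanSpace.single 3 1) 3)) * hq

lemma tangent_deriv_zero {g : E4 → ℝ} (hg : Differentiable ℝ g)
    (h0 : ∀ q : E4, ‖q‖ = 1 → g q = 0) {p v : E4} (hp : ‖p‖ = 1) (hv : ⟪p, v⟫ = 0) :
    fderiv ℝ g p v = 0 := by
  rcases eq_or_ne v 0 with rfl | hvne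
  · simp
  have hnv : ‖v‖ ≠ 0 := norm_ne_zero_iff.mpr hvne
  set w : E4 := ‖v‖⁻¹ • v with hw
  have hworth : ⟪p, w⟫ = 0 := by rw [hw, real_inner_smul_right, hv, mul_zero]
  have hwnorm : ‖w‖ = 1 := by rw [hw, norm_smul, norm_inv, norm_norm, inv_mul_cancel₀ hnv]
  set c : ℝ → E4 := fun t => Real.cos t • p + Real.sin t • w with hc
  have hsphere : ∀ t, ‖c t‖ = 1 := by
    intro t
    have h1 : ⟪c t, c t⟫ = 1 := by
      rw [hc]
      simp only [inner_add_add_self, real_inner_smul_left, real_inner_smul_right]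
      rw [real_inner_self_eq_norm_sq p, real_inner_self_eq_norm_sq w, hp, hwnorm]
      have hworth' : ⟪w, p⟫ = 0 := by rw [real_inner_comm]; exact hworth
      rw [hworth', hworth]
      nlinarith [Real.sin_sq_add_cos_sq t]
    have h2 : ‖c t‖ ^ 2 = 1 := by rw [← real_inner_self_eq_norm_sq]; exact h1
    nlinarith [norm_nonneg (c t)]
  have hcd : HasDerivAt c ((-Real.sin 0) • p + Real.cos 0 • w) 0 :=
    ((Real.hasDerivAt_cos 0).smul_const p).add ((Real.hasDerivAt_sin 0).smul_const w)
  have hcd' : HasDerivAt c w 0 := by simpa using hcd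
  have hc0 : c 0 = p := by simp [hc]
  have hf : HasFDerivAt g (fderiv ℝ g p) (c 0) := by rw [hc0]; exact (hg p).hasFDerivAt
  have hgc : HasDerivAt (g ∘ c) (fderiv ℝ g p w) 0 := hf.comp_hasDerivAt 0 hcd'
  have hzero : (g ∘ c) = fun _ => 0 := by funext t; exact h0 (c t) (hsphere t)
  have hzw : fderiv ℝ g p w = 0 := by
    rw [hzero] at hgc
    simpa using hgc.unique (hasDerivAt_const 0 0)
  have hvw : ‖v‖ • w = v := smul_inv_smul₀ hnv v
  calc fderiv ℝ g p v = fderiv ℝ g p (‖v‖ • w) := by rw [hvw]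
    _ = ‖v‖ • fderiv ℝ g p w := by rw [map_smul]
    _ = 0 := by rw [hzw, smul_zero]

end Statement2Aux

/-- Lemma 2 (instrumental lemma) on S³, with structure constant C₀ = 1.
Here `f = ⟨u,ξ⟩`, `f₁ = ⟨u,X₁⟩`, `f₂ = ⟨u,X₂⟩` and `ξ(h)(p) = Dh(p)[Jp]`. -/
theorem statement2 (u : E4 → E4) (hu : IsTangentField u) :
    -- (i) [ξ,u] = 0 on S³ iff ξ(f)=0, ξ(f₁)=−2f₂, ξ(f₂)=2f₁ on S³
    ((∀ p : E4, ‖p‖ = 1 → fderiv ℝ u p (Jm p) - Jm (u p) = 0) ↔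
      (∀ p : E4, ‖p‖ = 1 →
        fderiv ℝ (fun q => ⟪u q, Jm q⟫) p (Jm p) = 0 ∧
        fderiv ℝ (fun q => ⟪u q, X1 q⟫) p (Jm p) = -2 * ⟪u p, X2 p⟫ ∧
        fderiv ℝ (fun q => ⟪u q, X2 q⟫) p (Jm p) = 2 * ⟪u p, X1 p⟫)) ∧
    -- (ii) the 1-form dual to φu is closed iff div u − ξ(f) = 0, ξ(f₁)=−2f₂, ξ(f₂)=2f₁ on S³
    ((∀ p : E4, ‖p‖ = 1 → ∀ v w : E4, ⟪p, v⟫ = 0 → ⟪p, w⟫ = 0 →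
        ⟪Pt p (fderiv ℝ (fun q => phiT q (u q)) p v), w⟫
          = ⟪Pt p (fderiv ℝ (fun q => phiT q (u q)) p w), v⟫) ↔
      (∀ p : E4, ‖p‖ = 1 →
        sdiv u p - fderiv ℝ (fun q => ⟪u q, Jm q⟫) p (Jm p) = 0 ∧
        fderiv ℝ (fun q => ⟪u q, X1 q⟫) p (Jm p) = -2 * ⟪u p, X2 p⟫ ∧
        fderiv ℝ (fun q => ⟪u q, X2 q⟫) p (Jm p) = 2 * ⟪u p, X1 p⟫)) := by
  have hud : Differentiable ℝ u := hu.1.differentiable (by simp)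
  have htan : ∀ p : E4, ‖p‖ = 1 → ∀ v : E4, ⟪p, v⟫ = 0 →
      ⟪fderiv ℝ u p v, p⟫ = -⟪u p, v⟫ := by
    intro p hp v hv
    have hg : Differentiable ℝ (fun q : E4 => ⟪q, u q⟫) :=
      differentiable_id.inner ℝ hud
    have hz := tangent_deriv_zero hg hu.2 hp hv
    rw [fderiv_inner_apply ℝ differentiableAt_fun_id (hud p) v] at hz
    rw [fderiv_id'] at hz
    simp only [ContinuousLinearMap.coe_id', id_eq] at hz
    have c1 : ⟪p, fderiv ℝ u p v⟫ = ⟪fderiv ℝ u p v, p⟫ := real_inner_comm _ _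
    have c2 : ⟪u p, v⟫ = ⟪v, u p⟫ := real_inner_comm _ _
    linarith [hz, c1, c2]
  have hup : ∀ p : E4, ‖p‖ = 1 → ⟪u p, p⟫ = 0 := by
    intro p hp; rw [real_inner_comm]; exact hu.2 p hp
  have hF : ∀ p : E4, ‖p‖ = 1 →
      fderiv ℝ (fun q => ⟪u q, Jm q⟫) p (Jm p) = ⟪fderiv ℝ u p (Jm p), Jm p⟫ := by
    intro p hp
    rw [fderiv_fJ u hud p (Jm p), JJ p, inner_neg_right, hup p hp]
    ring
  have hF1 : ∀ p : E4, ‖p‖ = 1 →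
      fderiv ℝ (fun q => ⟪u q, X1 q⟫) p (Jm p)
        = ⟪fderiv ℝ u p (Jm p), X1 p⟫ - ⟪u p, X2 p⟫ := by
    intro p hp
    rw [fderiv_fX1 u hud p (Jm p), X1J p, inner_neg_right]
    ring
  have hF2 : ∀ p : E4, ‖p‖ = 1 →
      fderiv ℝ (fun q => ⟪u q, X2 q⟫) p (Jm p)
        = ⟪fderiv ℝ u p (Jm p), X2 p⟫ + ⟪u p, X1 p⟫ := by
    intro p hp
    rw [fderiv_fX2 u hud p (Jm p), X2J p]
  have hdiv : ∀ p : E4, ‖p‖ = 1 →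
      sdiv u p = ⟪fderiv ℝ u p (Jm p), Jm p⟫ + ⟪fderiv ℝ u p (X1 p), X1 p⟫
        + ⟪fderiv ℝ u p (X2 p), X2 p⟫ := by
    intro p hp
    unfold sdiv
    rw [trace_frame (fderiv ℝ u p) (norm_one_q hp)]
    ring
  constructor
  · -- part (i)
    constructor
    · intro H p hp
      have hAJ : fderiv ℝ u p (Jm p) = Jm (u p) := sub_eq_zero.mp (H p hp)
      refine ⟨?_, ?_, ?_⟩
      · rw [hF p hp, hAJ, RJ]
        exact hup p hp
      · rw [hF1 p hp, hAJ, RX1]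
        ring
      · rw [hF2 p hp, hAJ, RX2]
        ring
    · intro H p hp
      obtain ⟨h1, h2, h3⟩ := H p hp
      rw [hF p hp] at h1
      rw [hF1 p hp] at h2
      rw [hF2 p hp] at h3
      have ht : ⟪fderiv ℝ u p (Jm p), p⟫ = -⟪u p, Jm p⟫ := htan p hp (Jm p) (oJ p)
      have e0 : ⟪fderiv ℝ u p (Jm p) - Jm (u p), p⟫ = 0 := by
        rw [inner_sub_left, ht, Rp]
        ring
      have e1 : ⟪fderiv ℝ u p (Jm p) - Jm (u p), Jm p⟫ = 0 := by
        rw [inner_sub_left, h1, RJ, hup p hp]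
        ring
      have e2 : ⟪fderiv ℝ u p (Jm p) - Jm (u p), X1 p⟫ = 0 := by
        rw [inner_sub_left, RX1]
        linarith [h2]
      have e3 : ⟪fderiv ℝ u p (Jm p) - Jm (u p), X2 p⟫ = 0 := by
        rw [inner_sub_left, RX2]
        linarith [h3]
      have hfe := frame_expand p (fderiv ℝ u p (Jm p) - Jm (u p)) (norm_one_q hp)
      rw [e0, e1, e2, e3] at hfe
      simpa using hfe
  · -- part (ii)
    have hphiT : ∀ p : E4, ‖p‖ = 1 → ∀ v w : E4, ⟪p, w⟫ = 0 →
        ⟪Pt p (fderiv ℝ (fun q => phiT q (u q)) p v), w⟫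
          = ⟪Jm (fderiv ℝ u p v), w⟫ + ⟪u p, Jm p⟫ * ⟪v, w⟫ := by
      intro p hp v w hw
      rw [fderiv_phiTu u hud p v]
      simp only [Pt, inner_sub_left, inner_add_left, real_inner_smul_left, hw, mul_zero,
        sub_zero, add_zero]
    have hiff2 : (∀ p : E4, ‖p‖ = 1 → ∀ v w : E4, ⟪p, v⟫ = 0 → ⟪p, w⟫ = 0 →
        ⟪Pt p (fderiv ℝ (fun q => phiT q (u q)) p v), w⟫
          = ⟪Pt p (fderiv ℝ (fun q => phiT q (u q)) p w), v⟫) ↔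
        (∀ p : E4, ‖p‖ = 1 → ∀ v w : E4, ⟪p, v⟫ = 0 → ⟪p, w⟫ = 0 →
          ⟪Jm (fderiv ℝ u p v), w⟫ = ⟪Jm (fderiv ℝ u p w), v⟫) := by
      constructor
      · intro H p hp v w hv hw
        have h := H p hp v w hv hw
        rw [hphiT p hp v w hw, hphiT p hp w v hv] at h
        rw [real_inner_comm v w] at h
        linarith [h]
      · intro H p hp v w hv hw
        have h := H p hp v w hv hw
        rw [hphiT p hp v w hw, hphiT p hp w v hv]
        rw [real_inner_comm w v]
        linarith [h]
    refine hiff2.trans ?_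
    constructor
    · intro H p hp
      have h12 := H p hp (Jm p) (X1 p) (oJ p) (oX1 p)
      have h13 := H p hp (Jm p) (X2 p) (oJ p) (oX2 p)
      have h23 := H p hp (X1 p) (X2 p) (oX1 p) (oX2 p)
      rw [RX1, RJ] at h12
      rw [RX2, RJ] at h13
      rw [RX2, RX1] at h23
      have ht1 := htan p hp (X1 p) (oX1 p)
      have ht2 := htan p hp (X2 p) (oX2 p)
      refine ⟨?_, ?_, ?_⟩
      · rw [hdiv p hp, hF p hp]
        linarith [h23]
      · rw [hF1 p hp]
        linarith [h13, ht2]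
      · rw [hF2 p hp]
        linarith [h12, ht1]
    · intro H p hp v w hv hw
      obtain ⟨h1, h2, h3⟩ := H p hp
      rw [hdiv p hp, hF p hp] at h1
      rw [hF1 p hp] at h2
      rw [hF2 p hp] at h3
      have hd1 : ⟪fderiv ℝ u p (X1 p), X1 p⟫ + ⟪fderiv ℝ u p (X2 p), X2 p⟫ = 0 := by
        linarith [h1]
      have hc2 : ⟪fderiv ℝ u p (Jm p), X1 p⟫ = -⟪u p, X2 p⟫ := by linarith [h2]
      have hc3 : ⟪fderiv ℝ u p (Jm p), X2 p⟫ = ⟪u p, X1 p⟫ := by linarith [h3]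
      have htX1 := htan p hp (X1 p) (oX1 p)
      have htX2 := htan p hp (X2 p) (oX2 p)
      have hq := norm_one_q hp
      have hv0 : ⟪v, p⟫ = 0 := by rw [real_inner_comm]; exact hv
      have hw0 : ⟪w, p⟫ = 0 := by rw [real_inner_comm]; exact hw
      set α := ⟪v, Jm p⟫ with hα
      set β := ⟪v, X1 p⟫ with hβ
      set γ := ⟪v, X2 p⟫ with hγ
      set α' := ⟪w, Jm p⟫ with hα'
      set β' := ⟪w, X1 p⟫ with hβ'
      set γ' := ⟪w, X2 p⟫ with hγ'
      have hv' : v = α • Jm p + β • X1 p + γ • X2 p := by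
        have h := frame_expand p v hq
        rw [hv0, zero_smul, zero_add] at h
        rw [← hα, ← hβ, ← hγ] at h
        exact h
      have hw' : w = α' • Jm p + β' • X1 p + γ' • X2 p := by
        have h := frame_expand p w hq
        rw [hw0, zero_smul, zero_add] at h
        rw [← hα', ← hβ', ← hγ'] at h
        exact h
      rw [hv', hw']
      simp only [Jm_add, Jm_smul, map_add, map_smul, inner_add_left, inner_add_right,
        real_inner_smul_left, real_inner_smul_right, RJ, RX1, RX2]
      linear_combination (α' * β - α * β') * hc3 + (α' * β - α * β') * htX1
        + (α * γ' - α' * γ) * hc2 + (α' * γ - α * γ') * htX2 + (β * γ' - β' * γ) * hd1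
end
end

section
/- For every a∈ℝ the polynomial ψ_a satisfies: (i) Dψ_a(x)[Jx] = 0 for all x∈ℝ⁴ (ψ_a is a first integral of the Hopf field); (ii) Δψ_a(p) = 8(3ψ_a(p) − 2) for all p∈S³; equivalently, the Euclidean Laplacian of ψ_a satisfies Σᵢ ∂²ψ_a/∂xᵢ² = 16|x|² identically on ℝ⁴. -/
open RealInnerProductSpace

noncomputable section

/-! Parts (i) and the Euclidean Laplacian `Δ_E ψ_a = 16|x|²` are direct polynomial computations.
For (ii), on the unit sphere the spherical Laplacian of any `C²` function is
`Δf(p) = ⟨D²f(p)[p], p⟩ + 3 Df(p)[p] − tr D²f(p)` (the Euclidean Laplacian with its radial part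
removed). For `f` positively homogeneous of degree `r`, Euler's identity applied to `f` and to
`Df(·)[·] = r f` turns the first two terms into `r(r − 1) f + 3 r f = r(r + 2) f`; with `r = 4`
this gives `Δψ_a = 24 ψ_a − 16 |p|² = 8(3ψ_a − 2)`. -/

open InnerProductSpace

def IsPosHomogeneous {E F : Type*} [AddCommGroup E] [Module ℝ E] [AddCommGroup F] [Module ℝ F]
    (f : E → F) (r : ℝ) : Prop :=
  ∀ t : ℝ, 0 < t → ∀ x, f (t • x) = t ^ r • f x

section Euler

variable {E F : Type*} [NormedAddCommGroup E] [NormedSpace ℝ E]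
  [NormedAddCommGroup F] [NormedSpace ℝ F]

theorem IsPosHomogeneous.fderiv_apply_self {f : E → F} {r : ℝ} (hf : IsPosHomogeneous f r)
    {x : E} (hx : DifferentiableAt ℝ f x) : fderiv ℝ f x x = r • f x := by
  have hray : HasDerivAt (fun t : ℝ => f (t • x)) (fderiv ℝ f x x) 1 := by
    have hx' : DifferentiableAt ℝ f ((1 : ℝ) • x) := by rwa [one_smul]
    simpa [Function.comp_def] using
      hx'.hasFDerivAt.comp_hasDerivAt 1 ((hasDerivAt_id (1 : ℝ)).smul_const x)
  have hpow : HasDerivAt (fun t : ℝ => t ^ r • f x) (r • f x) 1 := by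
    simpa using (Real.hasDerivAt_rpow_const (x := 1) (p := r) (Or.inl one_ne_zero)).smul_const (f x)
  refine hray.unique (hpow.congr_of_eventuallyEq ?_)
  filter_upwards [lt_mem_nhds one_pos] with t ht using hf t ht x

end Euler

section Gradient

variable {E : Type*} [NormedAddCommGroup E] [InnerProductSpace ℝ E] [CompleteSpace E]

theorem ContDiff.differentiable_gradient {f : E → ℝ} (hf : ContDiff ℝ 2 f) :
    Differentiable ℝ (gradient f) :=
  (toDual ℝ E).symm.differentiable.comp
    ((hf.fderiv_right (m := 1) le_rfl).differentiable one_ne_zero)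

theorem IsPosHomogeneous.inner_fderiv_gradient_apply_self {f : E → ℝ} {r : ℝ}
    (hf : IsPosHomogeneous f r) (hd : Differentiable ℝ f) {p : E}
    (hg : DifferentiableAt ℝ (gradient f) p) :
    ⟪fderiv ℝ (gradient f) p p, p⟫ = r * (r - 1) * f p := by
  have heuler : (fun y => ⟪gradient f y, y⟫) = fun y => r * f y := by
    funext y
    rw [inner_gradient_left, hf.fderiv_apply_self (hd y), smul_eq_mul]
  have hprod : HasFDerivAt (fun y => ⟪gradient f y, y⟫) _ p :=
    hg.hasFDerivAt.inner ℝ (hasFDerivAt_id p)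
  rw [heuler] at hprod
  have hradial := congrArg (fun L => L p) (hprod.unique ((hd p).hasFDerivAt.const_mul r))
  simp only [ContinuousLinearMap.comp_apply, ContinuousLinearMap.prod_apply, fderivInnerCLM_apply,
    ContinuousLinearMap.id_apply, smul_apply, smul_eq_mul,
    hf.fderiv_apply_self (hd p), inner_gradient_left] at hradial
  linear_combination hradial

end Gradient

theorem EuclideanSpace.sum_fderiv_fderiv_single {ι : Type*} [Fintype ι] [DecidableEq ι]
    {f : EuclideanSpace ℝ ι → ℝ} {x : EuclideanSpace ℝ ι}
    (hg : DifferentiableAt ℝ (gradient f) x) :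
    ∑ i, fderiv ℝ (fun y => fderiv ℝ f y (EuclideanSpace.single i 1)) x
        (EuclideanSpace.single i 1)
      = LinearMap.trace ℝ (EuclideanSpace ℝ ι) (fderiv ℝ (gradient f) x) := by
  rw [LinearMap.trace_eq_sum_inner _ (EuclideanSpace.basisFun ι ℝ)]
  refine Finset.sum_congr rfl fun i _ => ?_
  have hcoord : (fun y => fderiv ℝ f y (EuclideanSpace.single i 1))
      = fun y => ⟪gradient f y, EuclideanSpace.single i 1⟫ :=
    funext fun y => inner_gradient_left.symm
  rw [hcoord, (hg.hasFDerivAt.inner ℝ (hasFDerivAt_const _ x)).fderiv]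
  simp [fderivInnerCLM_apply, real_inner_comm]

theorem fderiv_coord_apply {ι : Type*} [Fintype ι] (i : ι) (x v : EuclideanSpace ℝ ι) :
    fderiv ℝ (fun y : EuclideanSpace ℝ ι => y i) x v = v i := by
  rw [(PiLp.hasFDerivAt_apply 2 x i).fderiv]
  rfl

theorem slap_eq_of_norm_eq_one (f : E4 → ℝ) {p : E4} (hg : DifferentiableAt ℝ (gradient f) p)
    (hp : ‖p‖ = 1) :
    slap f p = ⟪fderiv ℝ (gradient f) p p, p⟫ + 3 * fderiv ℝ f p p
      - LinearMap.trace ℝ E4 (fderiv ℝ (gradient f) p) := by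
  have hL := (hasFDerivAt_id p).inner ℝ hg.hasFDerivAt
  have hS : HasFDerivAt (sgrad f) _ p := hg.hasFDerivAt.sub (hL.smul (hasFDerivAt_id p))
  simp only [slap, sdiv, hS.fderiv, id_eq, inner_gradient_right, Real.ringHom_apply,
    ContinuousLinearMap.toLinearMap_sub, ContinuousLinearMap.toLinearMap_add,
    ContinuousLinearMap.toLinearMap_smul, ContinuousLinearMap.coe_id,
    ContinuousLinearMap.coe_smulRight, ContinuousLinearMap.toLinearMap_comp,
    ContinuousLinearMap.coe_prod, map_sub, map_add, map_smul, LinearMap.trace_id,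
    finrank_euclideanSpace, Fintype.card_fin, Nat.cast_ofNat, smul_eq_mul,
    LinearMap.trace_smulRight, LinearMap.coe_comp, ContinuousLinearMap.coe_coe,
    Function.comp_apply, LinearMap.prod_apply, LinearMap.id_coe, Function.prod_apply,
    fderivInnerCLM_apply, sub_apply, add_apply, smul_apply, ContinuousLinearMap.id_apply,
    ContinuousLinearMap.smulRight_apply, ContinuousLinearMap.comp_apply,
    ContinuousLinearMap.prod_apply, inner_sub_left, inner_add_left, inner_smul_left,
    inner_self_eq_norm_sq_to_K, hp, one_pow, mul_one, neg_sub]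
  rw [real_inner_comm p]
  ring

theorem IsPosHomogeneous.slap_eq {f : E4 → ℝ} {r : ℝ} (hf : IsPosHomogeneous f r)
    (hd : Differentiable ℝ f) {p : E4} (hg : DifferentiableAt ℝ (gradient f) p)
    (hp : ‖p‖ = 1) :
    slap f p = r * (r + 2) * f p - LinearMap.trace ℝ E4 (fderiv ℝ (gradient f) p) := by
  rw [slap_eq_of_norm_eq_one f hg hp, hf.inner_fderiv_gradient_apply_self hd hg,
    hf.fderiv_apply_self (hd p), smul_eq_mul]
  ring

theorem contDiff_ψa (a : ℝ) : ContDiff ℝ 2 (ψa a) := by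
  unfold ψa
  fun_prop

theorem isPosHomogeneous_ψa (a : ℝ) : IsPosHomogeneous (ψa a) 4 := by
  intro t _ x
  simp only [ψa, PiLp.smul_apply, smul_eq_mul]
  norm_cast
  ring

theorem fderiv_ψa_apply_Jm (a : ℝ) (x : E4) : fderiv ℝ (ψa a) x (Jm x) = 0 := by
  unfold ψa
  simp (disch := fun_prop) only [fderiv_fun_add, fderiv_fun_sub, fderiv_fun_mul,
    fderiv_fun_pow, fderiv_fun_const, fderiv_coord_apply, add_apply, sub_apply, smul_apply,
    Pi.zero_apply, zero_apply, smul_eq_mul, nsmul_eq_mul, Jm,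
    Matrix.cons_val_zero, Matrix.cons_val_one, Matrix.cons_val]
  ring

theorem sum_fderiv_fderiv_ψa (a : ℝ) (x : E4) :
    ∑ i : Fin 4, fderiv ℝ (fun y => fderiv ℝ (ψa a) y (EuclideanSpace.single i 1)) x
        (EuclideanSpace.single i 1) = 16 * ‖x‖ ^ 2 := by
  unfold ψa
  simp (disch := fun_prop) only [fderiv_fun_add, fderiv_fun_sub, fderiv_fun_mul,
    fderiv_fun_pow, fderiv_fun_const, fderiv_coord_apply, add_apply, sub_apply, smul_apply,
    Pi.zero_apply, zero_apply, smul_eq_mul, nsmul_eq_mul, PiLp.single_apply, Fin.reduceEq,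
    ↓reduceIte, Fin.sum_univ_four, EuclideanSpace.real_norm_sq_eq]
  ring

/-- for every `a ∈ ℝ`, (i) `ψ_a` is a first integral of the Hopf field,
(ii) `Δψ_a = 8(3ψ_a − 2)` on S³; equivalently the Euclidean Laplacian of `ψ_a` is
`16|x|²` on all of ℝ⁴. -/
theorem statement10 (a : ℝ) :
    (∀ x : E4, fderiv ℝ (ψa a) x (Jm x) = 0) ∧
    (∀ p : E4, ‖p‖ = 1 → slap (ψa a) p = 8 * (3 * ψa a p - 2)) ∧
    (∀ x : E4,
      (∑ i : Fin 4,
        fderiv ℝ (fun y => fderiv ℝ (ψa a) y (EuclideanSpace.single i 1)) x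
          (EuclideanSpace.single i 1))
        = 16 * ‖x‖ ^ 2) := by
  have hg : Differentiable ℝ (gradient (ψa a)) := (contDiff_ψa a).differentiable_gradient
  refine ⟨fderiv_ψa_apply_Jm a, fun p hp => ?_, sum_fderiv_fderiv_ψa a⟩
  rw [(isPosHomogeneous_ψa a).slap_eq ((contDiff_ψa a).differentiable two_ne_zero) (hg p) hp,
    ← EuclideanSpace.sum_fderiv_fderiv_single (hg p), sum_fderiv_fderiv_ψa, hp]
  ring
end
end
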